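/- Let k : ℕ, m ≥ 1, and let L R : Fin k → MvPolynomial (Fin m) ℕ describe a system of k Diophantine equations in m unknowns. Then there exists a primitive recursive predicate ψ : ℕ → Bool such that: (a) the system has a solution (∃ x : Fin m → ℕ, ∀ i, MvPolynomial.eval x (L i) = MvPolynomial.eval x (R i)) if and only if ∃ n : ℕ, ψ n = false; equivalently (b) the system is unsolvable in natural numbers if and only if ψ n = true for all n : ℕ. -/

import Mathlib

/-!
Evaluating a polynomial with natural coefficients is built from `+` and `*`, so whether an
assignment `x : Fin m → ℕ` solves the system is a primitive recursive predicate of `x`.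
Composing it with the primitive recursive decoding `ℕ → Option (Fin m → ℕ)`, which hits every
assignment, gives `ψ`: `ψ n = false` exactly when `n` codes a solution.
-/

open Encodable

theorem Primrec.mvPolynomial_eval {α σ : Type*} [Primcodable α] {x : σ → α → ℕ}
    (hx : ∀ j, Primrec (x j)) (p : MvPolynomial σ ℕ) :
    Primrec fun a => MvPolynomial.eval (fun j => x j a) p := by
  induction p using MvPolynomial.induction_on with
  | C c => simpa using Primrec.const c
  | add p q hp hq => simpa using Primrec.nat_add.comp hp hq
  | mul_X p j hp => simpa using Primrec.nat_mul.comp hp (hx j)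

theorem Primrec.fin_pi {α σ : Type*} [Primcodable α] [Primcodable σ] {n : ℕ}
    {f : Fin n → α → σ} (hf : ∀ i, Primrec (f i)) : Primrec fun a i => f i a :=
  Primrec.fin_curry.2 (Primrec.fin_curry₁.2 hf).swap

theorem primrecPred_forall_eval_eq {k m : ℕ} (L R : Fin k → MvPolynomial (Fin m) ℕ) :
    PrimrecPred fun x : Fin m → ℕ =>
      ∀ i, MvPolynomial.eval x (L i) = MvPolynomial.eval x (R i) := by
  have hx (j : Fin m) : Primrec fun x : Fin m → ℕ => x j :=
    Primrec.fin_app.comp .id (.const j)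
  have hvalues (P : Fin k → MvPolynomial (Fin m) ℕ) :
      Primrec fun x : Fin m → ℕ => fun i => MvPolynomial.eval x (P i) :=
    Primrec.fin_pi fun i => Primrec.mvPolynomial_eval hx (P i)
  exact (Primrec.eq.comp (hvalues L) (hvalues R)).of_eq fun x => funext_iff

theorem PrimrecPred.exists_primrec_bool_iff_exists {α : Type*} [Primcodable α] {p : α → Prop}
    (hp : PrimrecPred p) : ∃ ψ : ℕ → Bool, Primrec ψ ∧ ((∃ a, p a) ↔ ∃ n, ψ n = false) := by
  obtain ⟨_, hp⟩ := hp
  -- `n` outside the range of `encode` decodes to `none` and is never a counterexample.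
  have hψ : Primrec fun n => (decode (α := α) n).elim true fun a => !decide (p a) :=
    (Primrec.option_casesOn Primrec.decode (Primrec.const true)
      (Primrec.not.comp (hp.comp .snd)).to₂).of_eq fun n => by cases decode (α := α) n <;> rfl
  refine ⟨_, hψ, ⟨fun ⟨a, ha⟩ => ⟨encode a, by simpa [encodek] using ha⟩, ?_⟩⟩
  rintro ⟨n, hn⟩
  cases h : decode (α := α) n with
  | none => simp [h] at hn
  | some a => exact ⟨a, by simpa [h] using hn⟩

theorem diophantine_unary_predicate_general (k m : ℕ)
    (L R : Fin k → MvPolynomial (Fin m) ℕ) :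
    ∃ ψ : ℕ → Bool, Primrec ψ ∧
      ((∃ x : Fin m → ℕ, ∀ i, MvPolynomial.eval x (L i) = MvPolynomial.eval x (R i)) ↔
        ∃ n : ℕ, ψ n = false) ∧
      ((¬ ∃ x : Fin m → ℕ, ∀ i, MvPolynomial.eval x (L i) = MvPolynomial.eval x (R i)) ↔
        ∀ n : ℕ, ψ n = true) := by
  obtain ⟨ψ, hψ, hsolvable⟩ := (primrecPred_forall_eval_eq L R).exists_primrec_bool_iff_exists
  exact ⟨ψ, hψ, hsolvable, by simp [hsolvable]⟩

/-- every system of Diophantine equations in `m ≥ 1` unknowns has an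
associated unary primitive recursive predicate `ψ` whose counterexamples
correspond exactly to the solutions of the system. -/
theorem diophantine_unary_predicate (k m : ℕ) (hm : 1 ≤ m)
    (L R : Fin k → MvPolynomial (Fin m) ℕ) :
    ∃ ψ : ℕ → Bool, Primrec ψ ∧
      ((∃ x : Fin m → ℕ, ∀ i, MvPolynomial.eval x (L i) = MvPolynomial.eval x (R i)) ↔
        ∃ n : ℕ, ψ n = false) ∧
      ((¬ ∃ x : Fin m → ℕ, ∀ i, MvPolynomial.eval x (L i) = MvPolynomial.eval x (R i)) ↔
        ∀ n : ℕ, ψ n = true) :=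
  diophantine_unary_predicate_general k m L R
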